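/- Let F(z) = |z|²·L(z) + K(z) on the unit disk 𝔻, where L(z) = h₁(z)·conj(g₁(z)) is logharmonic with h₁, g₁ analytic on 𝔻 and h₁(0) = 0, and K(z) = h₂(z) + conj(g₂(z)) is harmonic with h₂, g₂ analytic on 𝔻. Suppose F(0) = 0, λ_F(0) = ||h₂'(0)| − |g₂'(0)|| = 1, Λ_K(z) = |h₂'(z)| + |g₂'(z)| < Λ₁ for all z ∈ 𝔻, where Λ₁ > 1, and Λ_L(z) = |h₁'(z)·g₁(z)| + |h₁(z)·g₁'(z)| ≤ Λ₂ for all z ∈ 𝔻. If r₁ ∈ (0,1) satisfies Λ₁·(1 − Λ₁ r₁)/(Λ₁ − r₁) − 3 r₁² Λ₂ = 0, then F is univalent (injective) on the disk 𝔻_{r₁} = {|z| < r₁}. -/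

import Mathlib

open Complex Metric Set

open scoped ComplexConjugate

/-!
Let `w = z₁ - z₂` and `r = max ‖z₁‖ ‖z₂‖ < r₁`. The increment `h₂'(0) w + conj (g₂'(0) w)` of
the linear part of `K` at `0` has norm at least `λ_K(0) ‖w‖ = ‖w‖`, while `F(z₁) - F(z₂)` differs
from it by at most `(r (Λ₁² - 1) / (Λ₁ - r) + 3 r² Λ₂) ‖w‖`, a factor `< 1` because `r < r₁`. For the harmonic part, a unimodular `ε` aligning phases turns
`|h₂'(z) - h₂'(0)| + |g₂'(z) - g₂'(0)|` into `|f(z) - f(0)|` for the single holomorphic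
`f = h₂' + ε g₂'` of modulus `< Λ₁` with `|f(0)| ≥ 1`, which the Schwarz–Pick lemma bounds by
`r (Λ₁² - 1) / (Λ₁ - r)`. For the logharmonic part, the mean value theorem and `L(0) = 0` give
`|L(z)| ≤ Λ₂ |z|` and `|L(z₁) - L(z₂)| ≤ Λ₂ ‖w‖`, and `||z₁|² - |z₂|²| ≤ 2 r ‖w‖`.
-/

theorem Complex.exists_norm_eq_one_norm_add_mul_eq (u v : ℂ) :
    ∃ ε : ℂ, ‖ε‖ = 1 ∧ ‖u + ε * v‖ = ‖u‖ + ‖v‖ := by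
  refine ⟨exp ((arg u - arg v : ℝ) * I), norm_exp_ofReal_mul_I _, ?_⟩
  have hrot : u + exp ((arg u - arg v : ℝ) * I) * v = (‖u‖ + ‖v‖ : ℝ) * exp (arg u * I) := by
    have hu := norm_mul_exp_arg_mul_I u
    have hv := norm_mul_exp_arg_mul_I v
    have hB := exp_ne_zero (arg v * I)
    rw [ofReal_sub, sub_mul, exp_sub]
    generalize exp (arg u * I) = A at hu ⊢
    generalize exp (arg v * I) = B at hv hB ⊢
    conv_lhs => rw [← hv, ← hu]
    push_cast
    field_simp
  rw [hrot, norm_mul, norm_exp_ofReal_mul_I, mul_one, norm_real,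
    Real.norm_of_nonneg (by positivity)]

theorem sq_norm_sub_conj_mul_sub (Λ : ℝ) (a b : ℂ) :
    ‖(Λ : ℂ) ^ 2 - conj a * b‖ ^ 2 - Λ ^ 2 * ‖b - a‖ ^ 2
      = (Λ ^ 2 - ‖a‖ ^ 2) * (Λ ^ 2 - ‖b‖ ^ 2) := by
  apply ofReal_injective
  push_cast
  simp only [← mul_conj', map_sub, map_mul, map_pow, conj_conj, conj_ofReal]
  ring

theorem mul_norm_sub_lt_norm_sq_sub_conj_mul {Λ : ℝ} {a b : ℂ} (ha : ‖a‖ < Λ) (hb : ‖b‖ < Λ) :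
    Λ * ‖b - a‖ < ‖(Λ : ℂ) ^ 2 - conj a * b‖ := by
  have hΛ : 0 < Λ := (norm_nonneg a).trans_lt ha
  have key := sq_norm_sub_conj_mul_sub Λ a b
  have : 0 < (Λ ^ 2 - ‖a‖ ^ 2) * (Λ ^ 2 - ‖b‖ ^ 2) := by
    apply mul_pos <;> nlinarith [norm_nonneg a, norm_nonneg b]
  apply lt_of_pow_lt_pow_left₀ 2 (norm_nonneg _)
  nlinarith

theorem norm_sub_map_zero_mul_le_of_mapsTo_ball {f : ℂ → ℂ} {Λ : ℝ}
    (hd : DifferentiableOn ℂ f (ball 0 1)) (hf : MapsTo f (ball 0 1) (ball 0 Λ))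
    {z : ℂ} (hz : ‖z‖ < 1) :
    ‖f z - f 0‖ * (Λ - ‖f 0‖ * ‖z‖) ≤ ‖z‖ * (Λ ^ 2 - ‖f 0‖ ^ 2) := by
  set a := f 0
  have hf' : ∀ x ∈ ball (0 : ℂ) 1, ‖f x‖ < Λ := fun x hx => mem_ball_zero_iff.1 (hf hx)
  have ha : ‖a‖ < Λ := hf' 0 (mem_ball_self one_pos)
  have hΛ : 0 < Λ := (norm_nonneg a).trans_lt ha
  have hmob : ∀ x ∈ ball (0 : ℂ) 1, Λ * ‖f x - a‖ < ‖(Λ : ℂ) ^ 2 - conj a * f x‖ :=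
    fun x hx => mul_norm_sub_lt_norm_sq_sub_conj_mul ha (hf' x hx)
  have hden : ∀ x ∈ ball (0 : ℂ) 1, (Λ : ℂ) ^ 2 - conj a * f x ≠ 0 := fun x hx =>
    norm_pos_iff.1 ((mul_nonneg hΛ.le (norm_nonneg _)).trans_lt (hmob x hx))
  have hnormG : ∀ x, ‖Λ * (f x - a) / ((Λ : ℂ) ^ 2 - conj a * f x)‖
      = Λ * ‖f x - a‖ / ‖(Λ : ℂ) ^ 2 - conj a * f x‖ := by
    intro x
    rw [norm_div, norm_mul, norm_real, Real.norm_of_nonneg hΛ.le]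
  -- Schwarz's lemma for the Möbius transform of `f` sending `f 0` to `0`.
  have hschwarz : Λ * ‖f z - a‖ ≤ ‖z‖ * ‖(Λ : ℂ) ^ 2 - conj a * f z‖ := by
    have := Complex.norm_le_norm_of_mapsTo_ball
      (f := fun x => Λ * (f x - a) / ((Λ : ℂ) ^ 2 - conj a * f x))
      ((((differentiableOn_const _).mul (hd.sub_const a))).div
        ((differentiableOn_const _).sub ((differentiableOn_const _).mul hd)) hden)
      (fun x hx => by
        rw [mem_closedBall_zero_iff, hnormG, div_le_one ((norm_pos_iff.2 (hden x hx)))]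
        exact (hmob x hx).le)
      (by simp [a]) hz
    rwa [hnormG, div_le_iff₀ (norm_pos_iff.2 (hden z (mem_ball_zero_iff.2 hz)))] at this
  have hden_le : ‖(Λ : ℂ) ^ 2 - conj a * f z‖ ≤ (Λ ^ 2 - ‖a‖ ^ 2) + ‖a‖ * ‖f z - a‖ := by
    have : (Λ : ℂ) ^ 2 - conj a * f z = ((Λ ^ 2 - ‖a‖ ^ 2 : ℝ) : ℂ) - conj a * (f z - a) := by
      push_cast
      rw [← mul_conj', mul_comm a]
      ring
    rw [this]
    refine (norm_sub_le _ _).trans ?_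
    rw [norm_real, Real.norm_of_nonneg (by nlinarith [norm_nonneg a]), norm_mul, norm_conj]
  nlinarith [mul_le_mul_of_nonneg_left hden_le (norm_nonneg z)]

theorem mul_sq_sub_sq_div_sub_mul_le {Λ c s r : ℝ} (hc : 1 ≤ c) (hcΛ : c < Λ) (hs : 0 ≤ s)
    (hsr : s ≤ r) (hΛr : Λ * r ≤ 1) :
    s * (Λ ^ 2 - c ^ 2) / (Λ - c * s) ≤ r * (Λ ^ 2 - 1) / (Λ - r) := by
  have hΛ : 1 < Λ := hc.trans_lt hcΛ
  have hr : r < 1 := by nlinarith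
  have hcr : c * r ≤ 1 := by nlinarith
  calc s * (Λ ^ 2 - c ^ 2) / (Λ - c * s) ≤ r * (Λ ^ 2 - c ^ 2) / (Λ - c * r) := by
        rw [div_le_div_iff₀ (by nlinarith) (by linarith)]
        nlinarith [mul_nonneg (mul_nonneg (by nlinarith : 0 ≤ Λ ^ 2 - c ^ 2) (by linarith : 0 ≤ Λ))
          (sub_nonneg.2 hsr)]
    _ ≤ r * (Λ ^ 2 - 1) / (Λ - r) := by
        rw [div_le_div_iff₀ (by linarith) (by linarith)]
        have key : 0 ≤ Λ * (c + 1) - r * (Λ ^ 2 + c) := by nlinarith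
        nlinarith [mul_nonneg (mul_nonneg (hs.trans hsr) (sub_nonneg.2 hc)) key]

theorem norm_sub_add_norm_sub_le_of_norm_add_norm_lt {p q : ℂ → ℂ} {Λ r : ℝ}
    (hp : DifferentiableOn ℂ p (ball 0 1)) (hq : DifferentiableOn ℂ q (ball 0 1))
    (hb : ∀ z ∈ ball (0 : ℂ) 1, ‖p z‖ + ‖q z‖ < Λ) (h0 : 1 ≤ |‖p 0‖ - ‖q 0‖|)
    (hΛr : Λ * r ≤ 1) {z : ℂ} (hz : ‖z‖ ≤ r) :
    ‖p z - p 0‖ + ‖q z - q 0‖ ≤ r * (Λ ^ 2 - 1) / (Λ - r) := by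
  obtain ⟨ε, hε, hεsum⟩ := exists_norm_eq_one_norm_add_mul_eq (p z - p 0) (q z - q 0)
  set f : ℂ → ℂ := fun x => p x + ε * q x
  have hnorm_mul : ∀ x, ‖ε * q x‖ = ‖q x‖ := fun x => by rw [norm_mul, hε, one_mul]
  have hf : MapsTo f (ball 0 1) (ball 0 Λ) := fun x hx =>
    mem_ball_zero_iff.2 <| (norm_add_le _ _).trans_lt (by rw [hnorm_mul]; exact hb x hx)
  have hc : 1 ≤ ‖f 0‖ := by
    refine h0.trans ?_
    simpa [f, hε] using abs_norm_sub_norm_le (p 0) (-(ε * q 0))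
  have hcΛ : ‖f 0‖ < Λ := mem_ball_zero_iff.1 (hf (mem_ball_self one_pos))
  have hz1 : ‖z‖ < 1 := by nlinarith [norm_nonneg z]
  have hsp := norm_sub_map_zero_mul_le_of_mapsTo_ball (f := f)
    (hp.add ((differentiableOn_const ε).mul hq)) hf hz1
  have hfz : f z - f 0 = (p z - p 0) + ε * (q z - q 0) := by simp only [f]; ring
  rw [hfz, hεsum, ← le_div_iff₀ (by nlinarith [norm_nonneg z])] at hsp
  exact hsp.trans (mul_sq_sub_sq_div_sub_mul_le hc hcΛ (norm_nonneg z) hz hΛr)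

theorem norm_sub_add_norm_sub_le_of_norm_deriv_add_norm_deriv_le {H G : ℂ → ℂ} {s : Set ℂ} {B : ℝ}
    (hs : Convex ℝ s) (hH : ∀ x ∈ s, DifferentiableAt ℂ H x)
    (hG : ∀ x ∈ s, DifferentiableAt ℂ G x) (hB : ∀ x ∈ s, ‖deriv H x‖ + ‖deriv G x‖ ≤ B)
    {z₁ z₂ : ℂ} (hz₁ : z₁ ∈ s) (hz₂ : z₂ ∈ s) :
    ‖H z₁ - H z₂‖ + ‖G z₁ - G z₂‖ ≤ B * ‖z₁ - z₂‖ := by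
  obtain ⟨ε, hε, hεsum⟩ := exists_norm_eq_one_norm_add_mul_eq (H z₁ - H z₂) (G z₁ - G z₂)
  have hderiv : ∀ x ∈ s,
      HasDerivWithinAt (fun x => H x + ε * G x) (deriv H x + ε * deriv G x) s x := fun x hx =>
    ((hH x hx).hasDerivAt.add ((hG x hx).hasDerivAt.const_mul ε)).hasDerivWithinAt
  have hbound : ∀ x ∈ s, ‖deriv H x + ε * deriv G x‖ ≤ B := fun x hx =>
    (norm_add_le _ _).trans (by rw [norm_mul, hε, one_mul]; exact hB x hx)
  have := hs.norm_image_sub_le_of_norm_hasDerivWithin_le hderiv hbound hz₂ hz₁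
  rwa [show H z₁ + ε * G z₁ - (H z₂ + ε * G z₂) = H z₁ - H z₂ + ε * (G z₁ - G z₂) by ring,
    hεsum] at this

theorem norm_harmonic_sub_sub_linear_le {h g : ℂ → ℂ} {Λ r : ℝ}
    (hh : DifferentiableOn ℂ h (ball 0 1)) (hg : DifferentiableOn ℂ g (ball 0 1))
    (hb : ∀ z ∈ ball (0 : ℂ) 1, ‖deriv h z‖ + ‖deriv g z‖ < Λ)
    (h0 : 1 ≤ |‖deriv h 0‖ - ‖deriv g 0‖|) (hΛr : Λ * r ≤ 1)
    {z₁ z₂ : ℂ} (hz₁ : ‖z₁‖ ≤ r) (hz₂ : ‖z₂‖ ≤ r) :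
    ‖(h z₁ + conj (g z₁)) - (h z₂ + conj (g z₂)) -
        (deriv h 0 * (z₁ - z₂) + conj (deriv g 0 * (z₁ - z₂)))‖
      ≤ r * (Λ ^ 2 - 1) / (Λ - r) * ‖z₁ - z₂‖ := by
  have hΛ : 1 < Λ := by
    have := hb 0 (mem_ball_self one_pos)
    exact h0.trans_lt (abs_sub_lt_iff.2 ⟨by linarith [norm_nonneg (deriv g 0)],
      by linarith [norm_nonneg (deriv h 0)]⟩)
  have hsub : closedBall (0 : ℂ) r ⊆ ball 0 1 := closedBall_subset_ball (by nlinarith)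
  have hdiff : ∀ f : ℂ → ℂ, DifferentiableOn ℂ f (ball 0 1) →
      ∀ x ∈ closedBall (0 : ℂ) r, DifferentiableAt ℂ (fun z => f z - deriv f 0 * z) x :=
    fun f hf x hx => ((hf.differentiableAt (isOpen_ball.mem_nhds (hsub hx))).sub
      ((differentiableAt_id).const_mul _))
  have hderiv : ∀ f : ℂ → ℂ, DifferentiableOn ℂ f (ball 0 1) →
      ∀ x ∈ closedBall (0 : ℂ) r, deriv (fun z => f z - deriv f 0 * z) x = deriv f x - deriv f 0 :=
    fun f hf x hx => by
      simpa using ((hf.differentiableAt (isOpen_ball.mem_nhds (hsub hx))).hasDerivAt.fun_sub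
        ((hasDerivAt_id x).const_mul (deriv f 0))).deriv
  have key := norm_sub_add_norm_sub_le_of_norm_deriv_add_norm_deriv_le (convex_closedBall 0 r)
    (hdiff h hh) (hdiff g hg) (fun x hx => by
      rw [hderiv h hh x hx, hderiv g hg x hx]
      exact norm_sub_add_norm_sub_le_of_norm_add_norm_lt (hh.deriv isOpen_ball)
        (hg.deriv isOpen_ball) hb h0 hΛr (mem_closedBall_zero_iff.1 hx))
    (mem_closedBall_zero_iff.2 hz₁) (mem_closedBall_zero_iff.2 hz₂)
  have hsplit : (h z₁ + conj (g z₁)) - (h z₂ + conj (g z₂)) -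
        (deriv h 0 * (z₁ - z₂) + conj (deriv g 0 * (z₁ - z₂)))
      = (h z₁ - deriv h 0 * z₁ - (h z₂ - deriv h 0 * z₂))
        + conj (g z₁ - deriv g 0 * z₁ - (g z₂ - deriv g 0 * z₂)) := by
    simp only [map_sub, map_mul]
    ring
  rw [hsplit]
  exact (norm_add_le _ _).trans (by rwa [norm_conj])

theorem abs_norm_sub_norm_mul_le_norm_mul_add_conj (a b w : ℂ) :
    |‖a‖ - ‖b‖| * ‖w‖ ≤ ‖a * w + conj (b * w)‖ := by
  have := abs_norm_sub_norm_le (a * w) (-conj (b * w))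
  rwa [sub_neg_eq_add, norm_neg, norm_conj, norm_mul, norm_mul, ← sub_mul, abs_mul,
    abs_norm] at this

theorem norm_mul_conj_sub_mul_conj_le {h g : ℂ → ℂ} {s : Set ℂ} {M : ℝ} (hs : Convex ℝ s)
    (hh : ∀ x ∈ s, DifferentiableAt ℂ h x) (hg : ∀ x ∈ s, DifferentiableAt ℂ g x)
    (hM : ∀ x ∈ s, ‖deriv h x * g x‖ + ‖h x * deriv g x‖ ≤ M)
    {z₁ z₂ : ℂ} (hz₁ : z₁ ∈ s) (hz₂ : z₂ ∈ s) :
    ‖h z₁ * conj (g z₁) - h z₂ * conj (g z₂)‖ ≤ M * ‖z₁ - z₂‖ := by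
  set w := z₁ - z₂
  set γ : ℝ → ℂ := fun t => z₂ + t • w
  have hγs : ∀ t ∈ Icc (0 : ℝ) 1, γ t ∈ s := fun t ht => hs.add_smul_sub_mem hz₂ hz₁ ht
  have hγ : ∀ t, HasDerivAt γ w t := fun t => by
    simpa [γ] using ((hasDerivAt_id t).smul_const w).const_add z₂
  have hderiv : ∀ t ∈ Icc (0 : ℝ) 1, HasDerivWithinAt (fun t => h (γ t) * conj (g (γ t)))
      (deriv h (γ t) * w * conj (g (γ t)) + h (γ t) * conj (deriv g (γ t) * w)) (Icc 0 1) t := by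
    intro t ht
    have hhγ := (hh _ (hγs t ht)).hasDerivAt.comp t (hγ t)
    have hgγ := ((hg _ (hγs t ht)).hasDerivAt.comp t (hγ t)).star
    exact (hhγ.mul hgγ).hasDerivWithinAt
  have hbound : ∀ t ∈ Ico (0 : ℝ) 1,
      ‖deriv h (γ t) * w * conj (g (γ t)) + h (γ t) * conj (deriv g (γ t) * w)‖ ≤ M * ‖w‖ := by
    intro t ht
    refine (norm_add_le _ _).trans ?_
    have := mul_le_mul_of_nonneg_right (hM _ (hγs t (Ico_subset_Icc_self ht))) (norm_nonneg w)
    simp only [norm_mul, norm_conj] at this ⊢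
    linarith
  simpa [γ, w] using norm_image_sub_le_of_norm_deriv_le_segment_01' hderiv hbound

theorem norm_sq_mul_sub_sq_mul_le {z₁ z₂ a b : ℂ} {r Λ : ℝ} (hz₁ : ‖z₁‖ ≤ r) (hz₂ : ‖z₂‖ ≤ r)
    (ha : ‖a‖ ≤ Λ * r) (hab : ‖a - b‖ ≤ Λ * ‖z₁ - z₂‖) :
    ‖((‖z₁‖ : ℝ) : ℂ) ^ 2 * a - ((‖z₂‖ : ℝ) : ℂ) ^ 2 * b‖ ≤ 3 * r ^ 2 * Λ * ‖z₁ - z₂‖ := by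
  have hsq : |‖z₁‖ ^ 2 - ‖z₂‖ ^ 2| ≤ ‖z₁ - z₂‖ * (2 * r) := by
    rw [sq_sub_sq, abs_mul, abs_of_nonneg (by positivity), mul_comm]
    exact mul_le_mul (abs_norm_sub_norm_le z₁ z₂) (by linarith) (by positivity) (norm_nonneg _)
  have hsplit : ((‖z₁‖ : ℝ) : ℂ) ^ 2 * a - ((‖z₂‖ : ℝ) : ℂ) ^ 2 * b
      = ((‖z₁‖ ^ 2 - ‖z₂‖ ^ 2 : ℝ) : ℂ) * a + ((‖z₂‖ ^ 2 : ℝ) : ℂ) * (a - b) := by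
    push_cast; ring
  rw [hsplit]
  refine (norm_add_le _ _).trans ?_
  rw [norm_mul, norm_mul, norm_real, norm_real, Real.norm_eq_abs, Real.norm_eq_abs,
    abs_of_nonneg (a := ‖z₂‖ ^ 2) (by positivity)]
  have hΛw : 0 ≤ Λ * ‖z₁ - z₂‖ := (norm_nonneg _).trans hab
  have h2 : ‖z₂‖ ^ 2 ≤ r ^ 2 := pow_le_pow_left₀ (norm_nonneg _) hz₂ 2
  have hr : 0 ≤ r := (norm_nonneg z₁).trans hz₁
  nlinarith [mul_le_mul hsq ha (norm_nonneg a) (by positivity),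
    mul_le_mul h2 hab (norm_nonneg _) (by positivity)]

theorem norm_sq_mul_mul_conj_sub_le {h g : ℂ → ℂ} {M r : ℝ}
    (hh : DifferentiableOn ℂ h (ball 0 1)) (hg : DifferentiableOn ℂ g (ball 0 1)) (h0 : h 0 = 0)
    (hM : ∀ x ∈ ball (0 : ℂ) 1, ‖deriv h x * g x‖ + ‖h x * deriv g x‖ ≤ M) (hr : r < 1)
    {z₁ z₂ : ℂ} (hz₁ : ‖z₁‖ ≤ r) (hz₂ : ‖z₂‖ ≤ r) :
    ‖((‖z₁‖ : ℝ) : ℂ) ^ 2 * (h z₁ * conj (g z₁)) - ((‖z₂‖ : ℝ) : ℂ) ^ 2 * (h z₂ * conj (g z₂))‖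
      ≤ 3 * r ^ 2 * M * ‖z₁ - z₂‖ := by
  have hM0 : 0 ≤ M :=
    (add_nonneg (norm_nonneg _) (norm_nonneg _)).trans (hM 0 (mem_ball_self one_pos))
  have hmem : ∀ {z : ℂ}, ‖z‖ ≤ r → z ∈ ball (0 : ℂ) 1 :=
    fun hz => mem_ball_zero_iff.2 (hz.trans_lt hr)
  have hLip := fun {a b : ℂ} (ha : a ∈ ball (0 : ℂ) 1) (hb : b ∈ ball (0 : ℂ) 1) =>
    norm_mul_conj_sub_mul_conj_le (convex_ball 0 1)
      (fun x hx => hh.differentiableAt (isOpen_ball.mem_nhds hx))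
      (fun x hx => hg.differentiableAt (isOpen_ball.mem_nhds hx)) hM ha hb
  have hz₁M : ‖h z₁ * conj (g z₁)‖ ≤ M * r := by
    have := hLip (hmem hz₁) (mem_ball_self one_pos)
    rw [h0, zero_mul, sub_zero, sub_zero] at this
    exact this.trans (mul_le_mul_of_nonneg_left hz₁ hM0)
  exact norm_sq_mul_sub_sq_mul_le hz₁ hz₂ hz₁M (hLip (hmem hz₁) (hmem hz₂))

theorem mul_le_one_and_bound_lt_one_of_root {Λ₁ Λ₂ r₁ r : ℝ} (hΛ₁ : 1 < Λ₁) (hΛ₂ : 0 ≤ Λ₂)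
    (hr₁ : r₁ < 1) (hr : 0 ≤ r) (hrr₁ : r < r₁)
    (hroot : Λ₁ * (1 - Λ₁ * r₁) / (Λ₁ - r₁) - 3 * r₁ ^ 2 * Λ₂ = 0) :
    Λ₁ * r ≤ 1 ∧ r * (Λ₁ ^ 2 - 1) / (Λ₁ - r) + 3 * r ^ 2 * Λ₂ < 1 := by
  have hpos : 0 < Λ₁ - r₁ := by linarith
  rw [sub_eq_zero, div_eq_iff hpos.ne'] at hroot
  have hΛr₁ : Λ₁ * r₁ ≤ 1 := by
    nlinarith [mul_nonneg (mul_nonneg (sq_nonneg r₁) hΛ₂) hpos.le]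
  refine ⟨by nlinarith, ?_⟩
  have hmono : r * (Λ₁ ^ 2 - 1) / (Λ₁ - r) < r₁ * (Λ₁ ^ 2 - 1) / (Λ₁ - r₁) := by
    rw [div_lt_div_iff₀ (by linarith) hpos]
    nlinarith [mul_pos (by nlinarith : (0 : ℝ) < Λ₁ ^ 2 - 1) (by linarith : (0 : ℝ) < Λ₁)]
  have hval : r₁ * (Λ₁ ^ 2 - 1) / (Λ₁ - r₁) = 1 - 3 * r₁ ^ 2 * Λ₂ := by
    rw [div_eq_iff hpos.ne']
    linarith
  nlinarith [mul_le_mul_of_nonneg_right (pow_le_pow_left₀ hr hrr₁.le 2) hΛ₂]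

theorem stmt_8_general (h₁ g₁ h₂ g₂ : ℂ → ℂ) (Λ₁ Λ₂ : ℝ)
    (hh₁ : AnalyticOnNhd ℂ h₁ (ball 0 1)) (hg₁ : AnalyticOnNhd ℂ g₁ (ball 0 1))
    (hh₂ : AnalyticOnNhd ℂ h₂ (ball 0 1)) (hg₂ : AnalyticOnNhd ℂ g₂ (ball 0 1))
    (hh₁0 : h₁ 0 = 0)
    (F : ℂ → ℂ)
    (hF : ∀ z, F z = ((‖z‖ : ℝ) : ℂ) ^ 2 * (h₁ z * (starRingEnd ℂ) (g₁ z)) +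
      (h₂ z + (starRingEnd ℂ) (g₂ z)))
    (hlam : |‖deriv h₂ 0‖ - ‖deriv g₂ 0‖| = 1)
    (hΛ₁ : Λ₁ > 1)
    (hK : ∀ z ∈ ball (0 : ℂ) 1,
      ‖deriv h₂ z‖ + ‖deriv g₂ z‖ < Λ₁)
    (hL : ∀ z ∈ ball (0 : ℂ) 1,
      ‖deriv h₁ z * g₁ z‖ + ‖h₁ z * deriv g₁ z‖ ≤ Λ₂)
    (r₁ : ℝ) (hr₁ : r₁ ∈ Set.Ioo (0 : ℝ) 1)
    (hroot : Λ₁ * (1 - Λ₁ * r₁) / (Λ₁ - r₁) - 3 * r₁ ^ 2 * Λ₂ = 0) :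
    Set.InjOn F (ball 0 r₁) := by
  intro z₁ hz₁ z₂ hz₂ hF₁₂
  set r := max ‖z₁‖ ‖z₂‖
  have hz₁r : ‖z₁‖ ≤ r := le_max_left _ _
  have hz₂r : ‖z₂‖ ≤ r := le_max_right _ _
  have hΛ₂ : 0 ≤ Λ₂ :=
    (add_nonneg (norm_nonneg _) (norm_nonneg _)).trans (hL 0 (mem_ball_self one_pos))
  obtain ⟨hΛr, hbound⟩ := mul_le_one_and_bound_lt_one_of_root hΛ₁ hΛ₂ hr₁.2
    ((norm_nonneg z₁).trans hz₁r) (max_lt (mem_ball_zero_iff.1 hz₁) (mem_ball_zero_iff.1 hz₂))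
    hroot
  have hL₁₂ := norm_sq_mul_mul_conj_sub_le hh₁.differentiableOn hg₁.differentiableOn hh₁0 hL
    (by nlinarith) hz₁r hz₂r
  have hK₁₂ := norm_harmonic_sub_sub_linear_le hh₂.differentiableOn hg₂.differentiableOn hK
    hlam.ge hΛr hz₁r hz₂r
  have hlin := abs_norm_sub_norm_mul_le_norm_mul_add_conj (deriv h₂ 0) (deriv g₂ 0) (z₁ - z₂)
  rw [hlam, one_mul] at hlin
  have hw : ‖z₁ - z₂‖ ≤ (r * (Λ₁ ^ 2 - 1) / (Λ₁ - r) + 3 * r ^ 2 * Λ₂) * ‖z₁ - z₂‖ := by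
    rw [hF, hF] at hF₁₂
    rw [add_mul]
    refine hlin.trans (le_of_eq_of_le ?_ ((norm_add_le _ _).trans (add_le_add hK₁₂ hL₁₂)))
    rw [← norm_neg]
    congr 1
    linear_combination -hF₁₂
  have : ‖z₁ - z₂‖ = 0 := by nlinarith [norm_nonneg (z₁ - z₂)]
  exact sub_eq_zero.1 (norm_eq_zero.1 this)

/-- Landau-type theorem: univalence of `F(z) = |z|² L(z) + K(z)` on the disk of
radius `r₁`, the root of `Λ₁(1 − Λ₁ r)/(Λ₁ − r) − 3 r² Λ₂ = 0`. -/
theorem stmt_8 (h₁ g₁ h₂ g₂ : ℂ → ℂ) (Λ₁ Λ₂ : ℝ)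
    (hh₁ : AnalyticOnNhd ℂ h₁ (ball 0 1)) (hg₁ : AnalyticOnNhd ℂ g₁ (ball 0 1))
    (hh₂ : AnalyticOnNhd ℂ h₂ (ball 0 1)) (hg₂ : AnalyticOnNhd ℂ g₂ (ball 0 1))
    (hh₁0 : h₁ 0 = 0)
    (F : ℂ → ℂ)
    (hF : ∀ z, F z = ((‖z‖ : ℝ) : ℂ) ^ 2 * (h₁ z * (starRingEnd ℂ) (g₁ z)) +
      (h₂ z + (starRingEnd ℂ) (g₂ z)))
    (hF0 : F 0 = 0)
    (hlam : |‖deriv h₂ 0‖ - ‖deriv g₂ 0‖| = 1)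
    (hΛ₁ : Λ₁ > 1)
    (hK : ∀ z ∈ ball (0 : ℂ) 1,
      ‖deriv h₂ z‖ + ‖deriv g₂ z‖ < Λ₁)
    (hL : ∀ z ∈ ball (0 : ℂ) 1,
      ‖deriv h₁ z * g₁ z‖ + ‖h₁ z * deriv g₁ z‖ ≤ Λ₂)
    (r₁ : ℝ) (hr₁ : r₁ ∈ Set.Ioo (0 : ℝ) 1)
    (hroot : Λ₁ * (1 - Λ₁ * r₁) / (Λ₁ - r₁) - 3 * r₁ ^ 2 * Λ₂ = 0) :
    Set.InjOn F (ball 0 r₁) :=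
  stmt_8_general h₁ g₁ h₂ g₂ Λ₁ Λ₂ hh₁ hg₁ hh₂ hg₂ hh₁0 F hF hlam hΛ₁ hK hL r₁ hr₁ hroot
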